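/- arXiv:2210.15556 — 4 statements merged into one kernel-verified Lean document; each statement's English description precedes it below -/
import Mathlib

section
/- Let S be a tree on ℕ and let v(S) := {τ ∈ List Bool : w(τ) ∈ S} be its binary translation. Then v(S) is a binary tree; for every p : ℕ → ℕ, p ∈ [S] if and only if v(p) ∈ [v(S)]; every path of v(S) either has only finitely many ones or equals v(p) for some p ∈ [S]; and consequently [v(S)] is countable if and only if [S] is countable. -/
/-- A tree (over an alphabet `α`) is a nonempty set of finite sequences closed under
taking prefixes. -/
def IsTree {α : Type*} (T : Set (List α)) : Prop :=
  T.Nonempty ∧ ∀ σ ∈ T, ∀ τ : List α, τ <+: σ → τ ∈ T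

/-- The body of a tree: the set of infinite sequences all of whose finite initial
segments belong to `T`. -/
def body {α : Type*} (T : Set (List α)) : Set (ℕ → α) :=
  {f | ∀ n : ℕ, List.ofFn (fun i : Fin n => f i) ∈ T}

/-- The translation of a finite sequence `τ ∈ List Bool` to a finite sequence of naturals:
`w τ` is the unique `σ ∈ List ℕ` whose translation `0^{σ 0} 1 0^{σ 1} 1 ⋯ 0^{σ (n-1)} 1`
equals the prefix of `τ` up to and including its last `1` (`w τ = ⟨⟩` if `τ` has no `1`). -/
def wList : List Bool → List ℕ
  | [] => []
  | false :: τ =>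
      match wList τ with
      | [] => []
      | n :: σ => (n + 1) :: σ
  | true :: τ => 0 :: wList τ

open Classical in
/-- The translation `v : (ℕ → ℕ) → (ℕ → Bool)` mapping `p` to the binary sequence
`0^{p 0} 1 0^{p 1} 1 0^{p 2} 1 ⋯`; that is, `v p k = true` iff
`k = p 0 + p 1 + ⋯ + p m + m` for some `m`. -/
noncomputable def vSeq (p : ℕ → ℕ) : ℕ → Bool :=
  fun k => decide (∃ m : ℕ, k = (Finset.range (m + 1)).sum p + m)

/-!
`v` on finite sequences is a right inverse of `w`, and `w` is monotone for the prefix order, so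
`v(S)` is again a tree. The initial segment of `v(p)` ending at its `(m+1)`-st one is
`v(p ↾ (m+1))`, so the initial segments of `v(p)` lie in `v(S)` exactly when those of `p` lie
in `S`. A binary sequence with infinitely many ones is `v(p)`, where `p` records the gaps between
consecutive ones. As `v` is injective on sequences and there are only countably many binary
sequences with finitely many ones, `[v(S)]` is countable exactly when `[S]` is.
-/

lemma ofFn_eq_replicate_append_singleton {α : Type*} {k : ℕ} {f : Fin (k + 1) → α} {a b : α}
    (h : ∀ i : Fin k, f i.castSucc = a) (hlast : f (Fin.last k) = b) :
    List.ofFn f = List.replicate k a ++ [b] := by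
  rw [List.ofFn_succ', hlast, funext h, List.ofFn_const, List.concat_eq_append]

lemma ofFn_add_eq_append {α : Type*} (f : ℕ → α) (n k : ℕ) :
    List.ofFn (fun i : Fin (n + k) => f i) =
      List.ofFn (fun i : Fin n => f i) ++ List.ofFn (fun i : Fin k => f (n + i)) := by
  rw [List.ofFn_add]; rfl

lemma ofFn_prefix_ofFn {α : Type*} (f : ℕ → α) {n m : ℕ} (h : n ≤ m) :
    List.ofFn (fun i : Fin n => f i) <+: List.ofFn (fun i : Fin m => f i) := by
  obtain ⟨k, rfl⟩ := Nat.exists_eq_add_of_le h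
  rw [ofFn_add_eq_append]
  exact List.prefix_append _ _

lemma IsTree.nil_mem {α : Type*} {T : Set (List α)} (hT : IsTree T) : [] ∈ T :=
  let ⟨σ, hσ⟩ := hT.1
  hT.2 σ hσ [] List.nil_prefix

def vList (σ : List ℕ) : List Bool := σ.flatMap fun n => List.replicate n false ++ [true]

lemma vList_append (σ σ' : List ℕ) : vList (σ ++ σ') = vList σ ++ vList σ' :=
  List.flatMap_append

lemma vList_singleton (n : ℕ) : vList [n] = List.replicate n false ++ [true] :=
  List.flatMap_singleton _ _

lemma wList_replicate_false_append_true_cons (n : ℕ) (τ : List Bool) :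
    wList (List.replicate n false ++ true :: τ) = n :: wList τ := by
  induction n with
  | zero => simp [wList]
  | succ n ih => simp [List.replicate_succ, wList, ih]

lemma wList_vList (σ : List ℕ) : wList (vList σ) = σ := by
  induction σ with
  | nil => rfl
  | cons n σ ih =>
    simpa [vList, wList_replicate_false_append_true_cons] using ih

lemma wList_prefix_wList_append (τ ρ : List Bool) : wList τ <+: wList (τ ++ ρ) := by
  induction τ with
  | nil => exact List.nil_prefix
  | cons b τ ih =>
    obtain ⟨t, ht⟩ := ih
    cases b with
    | true => exact ⟨t, by simp [wList, ← ht]⟩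
    | false =>
      simp only [wList, List.cons_append, ← ht]
      cases wList τ with
      | nil => exact List.nil_prefix
      | cons n σ => exact ⟨t, rfl⟩

lemma wList_mono {τ τ' : List Bool} (h : τ <+: τ') : wList τ <+: wList τ' := by
  obtain ⟨ρ, rfl⟩ := h
  exact wList_prefix_wList_append τ ρ

abbrev binaryTranslation (S : Set (List ℕ)) : Set (List Bool) := {τ | wList τ ∈ S}

lemma IsTree.binaryTranslation {S : Set (List ℕ)} (hS : IsTree S) :
    IsTree (binaryTranslation S) :=
  ⟨⟨[], hS.nil_mem⟩, fun _ hσ _ hτ => hS.2 _ hσ _ (wList_mono hτ)⟩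

/-- `onePos p m` is the position of the `(m+1)`-st one in `vSeq p`. -/
def onePos (p : ℕ → ℕ) (m : ℕ) : ℕ := (Finset.range (m + 1)).sum p + m

lemma onePos_zero (p : ℕ → ℕ) : onePos p 0 = p 0 := by simp [onePos]

lemma onePos_succ (p : ℕ → ℕ) (m : ℕ) : onePos p (m + 1) = onePos p m + p (m + 1) + 1 := by
  simp only [onePos, Finset.sum_range_succ]; ring

lemma onePos_strictMono (p : ℕ → ℕ) : StrictMono (onePos p) :=
  strictMono_nat_of_lt_succ fun m => by rw [onePos_succ]; omega

lemma le_onePos (p : ℕ → ℕ) (m : ℕ) : m ≤ onePos p m := by simp [onePos]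

lemma onePos_injective : Function.Injective onePos := by
  intro p q h
  funext m
  cases m with
  | zero => simpa [onePos_zero] using congrFun h 0
  | succ m =>
    have := congrFun h (m + 1)
    rw [onePos_succ, onePos_succ, congrFun h m] at this
    omega

lemma exists_onePos_eq_of_strictMono {t : ℕ → ℕ} (ht : StrictMono t) : ∃ p, onePos p = t := by
  refine ⟨fun m => m.casesOn (t 0) fun m => t (m + 1) - t m - 1, funext fun m => ?_⟩
  induction m with
  | zero => exact onePos_zero _
  | succ m ih =>
    have := ht (Nat.lt_add_one m)
    rw [onePos_succ, ih]
    dsimp only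
    omega

lemma vSeq_eq_true_iff (p : ℕ → ℕ) (k : ℕ) : vSeq p k = true ↔ k ∈ Set.range (onePos p) := by
  simp [vSeq, onePos, eq_comm]

lemma vSeq_eq_false_of_forall_ne {p : ℕ → ℕ} {k : ℕ} (h : ∀ m, onePos p m ≠ k) :
    vSeq p k = false := by
  simpa [← Bool.not_eq_true, vSeq_eq_true_iff] using h

lemma vSeq_eq_false_of_lt_onePos {p : ℕ → ℕ} {k m : ℕ} (hlt : ∀ j < m, onePos p j < k)
    (hk : k < onePos p m) : vSeq p k = false :=
  vSeq_eq_false_of_forall_ne fun j hj =>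
    (hlt j ((onePos_strictMono p).lt_iff_lt.1 (hj ▸ hk))).ne hj

lemma ofFn_vSeq_onePos (p : ℕ → ℕ) (m : ℕ) :
    List.ofFn (fun i : Fin (onePos p m + 1) => vSeq p i) =
      vList (List.ofFn fun i : Fin (m + 1) => p i) := by
  induction m with
  | zero =>
    rw [onePos_zero, show (List.ofFn fun i : Fin 1 => p i) = [p 0] from rfl, vList_singleton]
    refine ofFn_eq_replicate_append_singleton (fun i => ?_) ?_
    · exact vSeq_eq_false_of_lt_onePos (m := 0) (by simp) (by simp [onePos_zero])
    · exact (vSeq_eq_true_iff p _).2 ⟨0, onePos_zero p⟩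
  | succ m ih =>
    have hlen : onePos p (m + 1) + 1 = (onePos p m + 1) + (p (m + 1) + 1) := by
      rw [onePos_succ]; ring
    rw [hlen, ofFn_add_eq_append, ih, List.ofFn_succ' (n := m + 1), List.concat_eq_append,
      vList_append, vList_singleton]
    congr 1
    refine ofFn_eq_replicate_append_singleton (fun i => ?_) ?_
    · refine vSeq_eq_false_of_lt_onePos (m := m + 1) (fun j hj => ?_) ?_
      · have := (onePos_strictMono p).monotone (Nat.le_of_lt_succ hj)
        omega
      · rw [Fin.val_castSucc, onePos_succ]
        omega
    · rw [vSeq_eq_true_iff, Fin.val_last, add_right_comm, ← onePos_succ]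
      exact Set.mem_range_self _

lemma vSeq_injective : Function.Injective vSeq := by
  intro p q h
  apply onePos_injective
  rw [← (onePos_strictMono p).range_inj (onePos_strictMono q)]
  ext k
  rw [← vSeq_eq_true_iff, ← vSeq_eq_true_iff, h]

lemma exists_eq_vSeq_of_infinite {q : ℕ → Bool} (hq : {k | q k = true}.Infinite) :
    ∃ p, q = vSeq p := by
  obtain ⟨p, hp⟩ := exists_onePos_eq_of_strictMono (Nat.nth_strictMono hq)
  refine ⟨p, funext fun k => Bool.eq_iff_iff.2 ?_⟩
  rw [vSeq_eq_true_iff, hp, Nat.range_nth_of_infinite hq]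
  rfl

lemma countable_setOf_finite_setOf_eq_true :
    {q : ℕ → Bool | {k | q k = true}.Finite}.Countable := by
  refine Set.Countable.ofPred_finite.preimage (f := fun q : ℕ → Bool => {k | q k = true}) ?_
  intro q q' h
  funext k
  exact Bool.eq_iff_iff.2 (Set.ext_iff.1 h k)

section Body

variable {S : Set (List ℕ)}

lemma mem_body_iff_vSeq_mem_body_binaryTranslation (hS : IsTree S) (p : ℕ → ℕ) :
    p ∈ body S ↔ vSeq p ∈ body (binaryTranslation S) := by
  constructor
  · intro hp n
    have hblock : List.ofFn (fun i : Fin (onePos p n + 1) => vSeq p i) ∈ binaryTranslation S := by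
      rw [Set.mem_ofPred_eq, ofFn_vSeq_onePos, wList_vList]
      exact hp (n + 1)
    exact hS.binaryTranslation.2 _ hblock _ (ofFn_prefix_ofFn _ (by have := le_onePos p n; omega))
  · rintro hq (_ | m)
    · exact hS.nil_mem
    · have hblock := hq (onePos p m + 1)
      rwa [Set.mem_ofPred_eq, ofFn_vSeq_onePos, wList_vList] at hblock

lemma finite_or_exists_eq_vSeq_of_mem_body_binaryTranslation (hS : IsTree S) {q : ℕ → Bool}
    (hq : q ∈ body (binaryTranslation S)) :
    {k | q k = true}.Finite ∨ ∃ p ∈ body S, q = vSeq p := by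
  refine (Set.finite_or_infinite _).imp_right fun hinf => ?_
  obtain ⟨p, rfl⟩ := exists_eq_vSeq_of_infinite hinf
  exact ⟨p, (mem_body_iff_vSeq_mem_body_binaryTranslation hS p).2 hq, rfl⟩

lemma countable_body_binaryTranslation_iff (hS : IsTree S) :
    (body (binaryTranslation S)).Countable ↔ (body S).Countable := by
  constructor
  · intro h
    refine (h.preimage vSeq_injective).mono fun p hp => ?_
    exact (mem_body_iff_vSeq_mem_body_binaryTranslation hS p).1 hp
  · intro h
    refine (countable_setOf_finite_setOf_eq_true.union (h.image vSeq)).mono fun q hq => ?_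
    rcases finite_or_exists_eq_vSeq_of_mem_body_binaryTranslation hS hq with hfin | ⟨p, hp, rfl⟩
    · exact Or.inl hfin
    · exact Or.inr ⟨p, hp, rfl⟩

end Body

/-- For a tree `S` on `ℕ`, its binary translation `v S = {τ : List Bool | w τ ∈ S}` is a
binary tree; `p ∈ [S]` iff `v p ∈ [v S]`; every path of `v S` has finitely many ones or
equals `v p` for some `p ∈ [S]`; and `[v S]` is countable iff `[S]` is countable. -/
theorem binaryTranslation_spec {S : Set (List ℕ)} (hS : IsTree S) :
    IsTree {τ : List Bool | wList τ ∈ S} ∧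
    (∀ p : ℕ → ℕ, p ∈ body S ↔ vSeq p ∈ body {τ : List Bool | wList τ ∈ S}) ∧
    (∀ q ∈ body {τ : List Bool | wList τ ∈ S},
      {k : ℕ | q k = true}.Finite ∨ ∃ p ∈ body S, q = vSeq p) ∧
    ((body {τ : List Bool | wList τ ∈ S}).Countable ↔ (body S).Countable) :=
  ⟨hS.binaryTranslation, mem_body_iff_vSeq_mem_body_binaryTranslation hS,
    fun _ => finite_or_exists_eq_vSeq_of_mem_body_binaryTranslation hS,
    countable_body_binaryTranslation_iff hS⟩
end

section
/- Let T be a tree on ℕ and let K be the union of all perfect subtrees of T (subsets S ⊆ T that are nonempty, closed under prefixes, and in which every element has two incomparable extensions). Then K is closed under prefixes, every element of K has two incomparable extensions in K (so K is a perfect tree whenever K ≠ ∅), K contains every perfect subtree of T, and [T] ∖ [K] is countable, where [K] denotes the set of functions f : ℕ → ℕ all of whose finite initial segments lie in K. -/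
/-- Two finite sequences are incomparable if neither is a prefix of the other. -/
def Incomp {α : Type*} (σ τ : List α) : Prop :=
  ¬σ <+: τ ∧ ¬τ <+: σ

/-- A tree is perfect if every element has two incomparable proper extensions in the tree. -/
def PerfectTree {α : Type*} (T : Set (List α)) : Prop :=
  ∀ σ ∈ T, ∃ τ ∈ T, ∃ τ' ∈ T,
    (σ <+: τ ∧ σ ≠ τ) ∧ (σ <+: τ' ∧ σ ≠ τ') ∧ Incomp τ τ'

/-- A perfect subtree of `T` is a nonempty subset of `T` closed under prefixes, in which
every element has two incomparable extensions. -/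
def PerfectSubtree {α : Type*} (S T : Set (List α)) : Prop :=
  S ⊆ T ∧ S.Nonempty ∧ (∀ σ ∈ S, ∀ τ : List α, τ <+: σ → τ ∈ S) ∧ PerfectTree S

/-- The union of all perfect subtrees of `T`. -/
def perfectKernel (T : Set (List ℕ)) : Set (List ℕ) :=
  {σ | ∃ S : Set (List ℕ), PerfectSubtree S T ∧ σ ∈ S}

section Aux

/-- initial segment of length `n` of a branch -/
def restrCB (f : ℕ → ℕ) (n : ℕ) : List ℕ := List.ofFn fun i : Fin n => f i

lemma restrCB_length (f : ℕ → ℕ) (n : ℕ) : (restrCB f n).length = n := by simp [restrCB]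

lemma restrCB_get (f : ℕ → ℕ) (n i : ℕ) (h : i < (restrCB f n).length) :
    (restrCB f n).get ⟨i, h⟩ = f i := by simp [restrCB]

lemma restrCB_prefix (f : ℕ → ℕ) {m n : ℕ} (h : m ≤ n) : restrCB f m <+: restrCB f n := by
  refine List.prefix_iff_eq_take.mpr (List.ext_get ?_ ?_)
  · simp [restrCB, h]
  · intro i h1 h2
    simp [restrCB, List.getElem_take']

/-- branches of `T` through `σ` -/
def BrCB (T : Set (List ℕ)) (σ : List ℕ) : Set (ℕ → ℕ) :=
  {f | f ∈ body T ∧ ∀ i : ℕ, (h : i < σ.length) → f i = σ.get ⟨i, h⟩}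

lemma mem_BrCB_restrCB {T : Set (List ℕ)} {f : ℕ → ℕ} (hf : f ∈ body T) (n : ℕ) :
    f ∈ BrCB T (restrCB f n) := ⟨hf, fun i h => (restrCB_get f n i h).symm⟩

lemma restrCB_eq_of_mem {T : Set (List ℕ)} {f : ℕ → ℕ} {σ : List ℕ} (hf : f ∈ BrCB T σ) :
    restrCB f σ.length = σ := by
  refine List.ext_get (by simp [restrCB]) ?_
  intro i h1 h2
  rw [restrCB_get, hf.2 i h2]

lemma BrCB_mono {T : Set (List ℕ)} {σ τ : List ℕ} (h : τ <+: σ) : BrCB T σ ⊆ BrCB T τ := by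
  rintro f ⟨hf, hs⟩
  refine ⟨hf, fun i hi => ?_⟩
  have hi' : i < σ.length := lt_of_lt_of_le hi h.length_le
  rw [hs i hi']
  simpa using (List.IsPrefix.getElem h hi).symm

/-- the set of nodes of `T` with uncountably many branches through them -/
def ScB (T : Set (List ℕ)) : Set (List ℕ) := {σ | σ ∈ T ∧ ¬ (BrCB T σ).Countable}

lemma ScB_subset (T : Set (List ℕ)) : ScB T ⊆ T := fun _ h => h.1

lemma ScB_prefix_closed {T : Set (List ℕ)} (hT : IsTree T) :
    ∀ σ ∈ ScB T, ∀ τ : List ℕ, τ <+: σ → τ ∈ ScB T := by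
  rintro σ ⟨hσT, hσ⟩ τ hpre
  exact ⟨hT.2 σ hσT τ hpre, fun hc => hσ (hc.mono (BrCB_mono hpre))⟩

lemma ScB_perfect {T : Set (List ℕ)} (hT : IsTree T) : PerfectTree (ScB T) := by
  rintro σ ⟨hσT, hσ⟩
  by_contra hcon
  apply hσ
  -- the extensions of σ outside ScB T
  set A : Set (List ℕ) := {τ | τ ∈ T ∧ σ <+: τ ∧ τ ∉ ScB T} with hA
  have hAc : A.Countable := Set.to_countable A
  have hUnion : (⋃ τ ∈ A, BrCB T τ).Countable := by
    refine hAc.biUnion fun τ hτ => ?_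
    by_contra hc
    exact hτ.2.2 ⟨hτ.1, hc⟩
  have hsub : (BrCB T σ \ ⋃ τ ∈ A, BrCB T τ).Subsingleton := by
    intro f hf g hg
    by_contra hfg
    have hdiff : ∃ n₀ : ℕ, f n₀ ≠ g n₀ := by
      by_contra hd; push_neg at hd; exact hfg (funext hd)
    obtain ⟨n₀, hn₀⟩ := hdiff
    set n : ℕ := max (σ.length + 1) (n₀ + 1) with hn
    have hσn : σ.length < n := lt_of_lt_of_le (Nat.lt_succ_self _) (le_max_left _ _)
    have hn₀n : n₀ < n := lt_of_lt_of_le (Nat.lt_succ_self _) (le_max_right _ _)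
    have hfB : f ∈ BrCB T σ := hf.1
    have hgB : g ∈ BrCB T σ := hg.1
    have key : ∀ h : ℕ → ℕ, h ∈ BrCB T σ \ ⋃ τ ∈ A, BrCB T τ → restrCB h n ∈ ScB T := by
      intro h hh
      by_contra hns
      have hT' : restrCB h n ∈ T := hh.1.1 n
      have hpre : σ <+: restrCB h n := by
        have := restrCB_eq_of_mem hh.1
        calc σ = restrCB h σ.length := this.symm
        _ <+: restrCB h n := restrCB_prefix h hσn.le
      have : h ∈ ⋃ τ ∈ A, BrCB T τ := by
        refine Set.mem_biUnion (show restrCB h n ∈ A from ⟨hT', hpre, hns⟩) ?_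
        exact mem_BrCB_restrCB hh.1.1 n
      exact hh.2 this
    have hfS := key f hf
    have hgS := key g hg
    have hσf : σ <+: restrCB f n := by
      have := restrCB_eq_of_mem hfB
      calc σ = restrCB f σ.length := this.symm
      _ <+: restrCB f n := restrCB_prefix f hσn.le
    have hσg : σ <+: restrCB g n := by
      have := restrCB_eq_of_mem hgB
      calc σ = restrCB g σ.length := this.symm
      _ <+: restrCB g n := restrCB_prefix g hσn.le
    have hne : restrCB f n ≠ restrCB g n := by
      intro he
      apply hn₀
      have := List.get_of_eq he ⟨n₀, by simp [restrCB_length, hn₀n]⟩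
      simpa [restrCB] using this
    have hlenf : σ ≠ restrCB f n := by
      intro he; apply hσn.ne; rw [he, restrCB_length]
    have hleng : σ ≠ restrCB g n := by
      intro he; apply hσn.ne; rw [he, restrCB_length]
    have hinc : Incomp (restrCB f n) (restrCB g n) := by
      constructor
      · intro hp; exact hne (hp.eq_of_length (by simp [restrCB_length]))
      · intro hp; exact hne (hp.eq_of_length (by simp [restrCB_length])).symm
    exact hcon ⟨_, hfS, _, hgS, ⟨hσf, hlenf⟩, ⟨hσg, hleng⟩, hinc⟩
  have : (BrCB T σ).Countable := by
    have : BrCB T σ ⊆ (BrCB T σ \ ⋃ τ ∈ A, BrCB T τ) ∪ ⋃ τ ∈ A, BrCB T τ := by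
      intro f hf
      by_cases h : f ∈ ⋃ τ ∈ A, BrCB T τ
      · exact Or.inr h
      · exact Or.inl ⟨hf, h⟩
    exact Set.Countable.mono this (hsub.countable.union hUnion)
  exact this

lemma ScB_mem_kernel {T : Set (List ℕ)} (hT : IsTree T) {σ : List ℕ} (hσ : σ ∈ ScB T) :
    σ ∈ perfectKernel T :=
  ⟨ScB T, ⟨ScB_subset T, ⟨σ, hσ⟩, ScB_prefix_closed hT, ScB_perfect hT⟩, hσ⟩

lemma BrCB_countable_of_not_kernel {T : Set (List ℕ)} (hT : IsTree T) {σ : List ℕ}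
    (hσT : σ ∈ T) (hσ : σ ∉ perfectKernel T) : (BrCB T σ).Countable := by
  by_contra hc
  exact hσ (ScB_mem_kernel hT ⟨hσT, hc⟩)

end Aux

/-- The union `K` of all perfect subtrees of a tree `T` on `ℕ` is closed under prefixes,
every element of `K` has two incomparable extensions in `K` (so `K` is a perfect tree
whenever it is nonempty), `K` contains every perfect subtree of `T`, and `[T] \ [K]` is
countable. -/
theorem perfectKernel_spec {T : Set (List ℕ)} (hT : IsTree T) :
    (∀ σ ∈ perfectKernel T, ∀ τ : List ℕ, τ <+: σ → τ ∈ perfectKernel T) ∧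
    PerfectTree (perfectKernel T) ∧
    (∀ S : Set (List ℕ), PerfectSubtree S T → S ⊆ perfectKernel T) ∧
    (body T \ body (perfectKernel T)).Countable := by
  refine ⟨?_, ?_, ?_, ?_⟩
  · rintro σ ⟨S, hS, hσS⟩ τ hpre
    exact ⟨S, hS, hS.2.2.1 σ hσS τ hpre⟩
  · rintro σ ⟨S, hS, hσS⟩
    obtain ⟨τ, hτ, τ', hτ', h⟩ := hS.2.2.2 σ hσS
    exact ⟨τ, ⟨S, hS, hτ⟩, τ', ⟨S, hS, hτ'⟩, h⟩
  · intro S hS σ hσ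
    exact ⟨S, hS, hσ⟩
  · set A : Set (List ℕ) := {σ | σ ∈ T ∧ σ ∉ perfectKernel T} with hA
    have hsub : body T \ body (perfectKernel T) ⊆ ⋃ σ ∈ A, BrCB T σ := by
      rintro f ⟨hfT, hfK⟩
      have : ∃ n, List.ofFn (fun i : Fin n => f i) ∉ perfectKernel T := by
        by_contra h; push_neg at h; exact hfK h
      obtain ⟨n, hn⟩ := this
      refine Set.mem_biUnion (show restrCB f n ∈ A from ⟨hfT n, hn⟩) ?_
      exact mem_BrCB_restrCB hfT n
    refine Set.Countable.mono hsub ?_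
    exact (Set.to_countable A).biUnion fun σ hσ => BrCB_countable_of_not_kernel hT hσ.1 hσ.2
end

section
/- A tree T on ℕ has uncountable body [T] if and only if T contains a perfect subtree, i.e. a subset S ⊆ T that is nonempty, closed under prefixes, and in which every element has two incomparable extensions. -/
/-! The body of a tree is closed in Baire space `ℕ → ℕ`. If it is uncountable, the
Cantor–Bendixson theorem yields a nonempty perfect set `D` inside it, and the initial segments
of the points of `D` form a perfect subtree: a point of `D` and a nearby different point of `D`
split into incomparable segments. Conversely, every node of a perfect subtree extends to a
branch, so its body is a nonempty perfect closed set, which is uncountable since it carries a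
Cantor set. -/

open Set Topology PiNat

local notation:max f " ↾ " n:max => List.ofFn fun i : Fin n => f i

section Segments

variable {α : Type*}

lemma ofFn_prefix_ofFn_of_le (f : ℕ → α) {m n : ℕ} (h : m ≤ n) : f ↾ m <+: f ↾ n := by
  rw [List.prefix_iff_eq_take]
  apply List.ext_getElem <;> simp [h]

lemma ofFn_eq_ofFn_iff_mem_cylinder {f g : ℕ → α} {n : ℕ} : f ↾ n = g ↾ n ↔ g ∈ cylinder f n := by
  simp [List.ofFn_inj, funext_iff, mem_cylinder_iff, Fin.forall_iff, eq_comm]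

lemma ofFn_length_eq_of_prefix_ofFn {σ : List α} {f : ℕ → α} {n : ℕ} (h : σ <+: f ↾ n) :
    f ↾ σ.length = σ := by
  have hle : σ.length ≤ n := by simpa using h.length_le
  exact (List.prefix_of_prefix_length_le (ofFn_prefix_ofFn_of_le f hle) h (by simp)).eq_of_length
    (by simp)

lemma prefix_ofFn_and_ne_of_lt {σ : List α} {f : ℕ → α} {n : ℕ} (hσ : f ↾ σ.length = σ)
    (h : σ.length < n) : σ <+: f ↾ n ∧ σ ≠ f ↾ n := by
  refine ⟨hσ ▸ ofFn_prefix_ofFn_of_le f h.le, fun he => ?_⟩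
  have := congrArg List.length he
  simp only [List.length_ofFn] at this
  omega

lemma incomp_of_length_eq_of_ne {σ τ : List α} (hl : σ.length = τ.length) (hne : σ ≠ τ) :
    Incomp σ τ :=
  ⟨fun h => hne (h.eq_of_length hl), fun h => hne (h.eq_of_length hl.symm).symm⟩

lemma Incomp.ofFn_ne_or_ofFn_ne {τ τ' : List α} (h : Incomp τ τ') (f : ℕ → α) :
    f ↾ τ.length ≠ τ ∨ f ↾ τ'.length ≠ τ' := by
  by_contra! ⟨hτ, hτ'⟩
  rcases le_total τ.length τ'.length with hle | hle
  · apply h.1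
    rw [← hτ, ← hτ']
    exact ofFn_prefix_ofFn_of_le f hle
  · apply h.2
    rw [← hτ, ← hτ']
    exact ofFn_prefix_ofFn_of_le f hle

lemma exists_ofFn_eq_of_chain (c : ℕ → List α) (hc : ∀ k, c k <+: c (k + 1))
    (hlen : ∀ k, k ≤ (c k).length) : ∃ f : ℕ → α, ∀ k, f ↾ (c k).length = c k := by
  have hmono : ∀ {a b}, a ≤ b → c a <+: c b := fun h => Nat.rel_of_forall_rel_succ_of_le _ hc h
  refine ⟨fun i => (c (i + 1))[i]'(by have := hlen (i + 1); omega), fun k => ?_⟩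
  apply List.ext_getElem (by simp)
  intro i hi hi'
  simp only [List.getElem_ofFn]
  rcases le_total (i + 1) k with h | h
  · exact (hmono h).getElem _
  · exact ((hmono h).getElem hi').symm

end Segments

section Body

variable {α : Type*}

lemma body_mono {S T : Set (List α)} (h : S ⊆ T) : body S ⊆ body T :=
  fun _ hf n => h (hf n)

lemma isClosed_body [TopologicalSpace α] [DiscreteTopology α] (T : Set (List α)) :
    IsClosed (body T) := by
  have : body T = ⋂ n : ℕ, (fun f : ℕ → α => fun i : Fin n => f i) ⁻¹' {g | List.ofFn g ∈ T} := by
    ext; simp [body]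
  rw [this]
  exact isClosed_iInter fun n => (isClosed_discrete _).preimage (by fun_prop)

lemma exists_cylinder_subset_of_mem_nhds [TopologicalSpace α] [DiscreteTopology α]
    {f : ℕ → α} {U : Set (ℕ → α)} (hU : U ∈ 𝓝 f) : ∃ n, cylinder f n ⊆ U := by
  obtain ⟨_, ⟨g, n, rfl⟩, hf, hsub⟩ := (isTopologicalBasis_cylinders fun _ => α).mem_nhds_iff.1 hU
  exact ⟨n, mem_cylinder_iff_eq.1 hf ▸ hsub⟩

lemma PerfectTree.exists_proper_extension {S : Set (List α)} (hP : PerfectTree S) :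
    ∀ σ ∈ S, ∃ τ ∈ S, σ <+: τ ∧ σ ≠ τ :=
  fun σ hσ => let ⟨τ, hτ, _, _, hστ, _⟩ := hP σ hσ; ⟨τ, hτ, hστ⟩

lemma exists_mem_body_ofFn_eq {S : Set (List α)} (hS : ∀ σ ∈ S, ∀ τ, τ <+: σ → τ ∈ S)
    (hext : ∀ σ ∈ S, ∃ τ ∈ S, σ <+: τ ∧ σ ≠ τ) {σ : List α} (hσ : σ ∈ S) :
    ∃ f ∈ body S, f ↾ σ.length = σ := by
  choose! e heS hpre hne using hext
  set c : ℕ → List α := fun k => e^[k] σ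
  have hcS : ∀ k, c k ∈ S := by
    intro k
    induction k with
    | zero => exact hσ
    | succ k ih => simpa [c, Function.iterate_succ_apply'] using heS _ ih
  have hstep : ∀ k, c k <+: c (k + 1) ∧ c k ≠ c (k + 1) := fun k => by
    simpa [c, Function.iterate_succ_apply'] using And.intro (hpre _ (hcS k)) (hne _ (hcS k))
  have hlen : ∀ k, k ≤ (c k).length := by
    intro k
    induction k with
    | zero => exact Nat.zero_le _
    | succ k ih =>
      obtain ⟨hck, hck'⟩ := hstep k
      exact ih.trans_lt (hck.length_le.lt_of_ne fun h => hck' (hck.eq_of_length h))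
  obtain ⟨f, hf⟩ := exists_ofFn_eq_of_chain c (fun k => (hstep k).1) hlen
  refine ⟨f, fun n => hS _ (hcS n) _ ?_, hf 0⟩
  rw [← hf n]
  exact ofFn_prefix_ofFn_of_le f (hlen n)

lemma perfect_body [TopologicalSpace α] [DiscreteTopology α] {S : Set (List α)}
    (hS : ∀ σ ∈ S, ∀ τ, τ <+: σ → τ ∈ S) (hP : PerfectTree S) : Perfect (body S) := by
  refine ⟨isClosed_body S, preperfect_iff_nhds.2 fun f hf U hU => ?_⟩
  obtain ⟨n, hn⟩ := exists_cylinder_subset_of_mem_nhds hU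
  have hbranch : ∀ ρ ∈ S, f ↾ n <+: ρ → f ↾ ρ.length ≠ ρ → ∃ g ∈ U ∩ body S, g ≠ f := by
    intro ρ hρ hnρ hρf
    obtain ⟨g, hg, hgρ⟩ := exists_mem_body_ofFn_eq hS hP.exists_proper_extension hρ
    refine ⟨g, ⟨hn ?_, hg⟩, fun h => hρf (h ▸ hgρ)⟩
    have hgn := ofFn_length_eq_of_prefix_ofFn (f := g) (hgρ ▸ hnρ)
    rw [List.length_ofFn] at hgn
    exact ofFn_eq_ofFn_iff_mem_cylinder.1 hgn.symm
  -- Two incomparable extensions of `f ↾ n` cannot both lie along `f`.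
  obtain ⟨τ, hτ, τ', hτ', ⟨hnτ, -⟩, ⟨hnτ', -⟩, hinc⟩ := hP _ (hf n)
  rcases hinc.ofFn_ne_or_ofFn_ne f with h | h
  · exact hbranch τ hτ hnτ h
  · exact hbranch τ' hτ' hnτ' h

def prefixTree (D : Set (ℕ → α)) : Set (List α) :=
  {σ | ∃ f ∈ D, f ↾ σ.length = σ}

variable {D : Set (ℕ → α)}

lemma ofFn_mem_prefixTree {f : ℕ → α} (hf : f ∈ D) (n : ℕ) : f ↾ n ∈ prefixTree D :=
  ⟨f, hf, ofFn_length_eq_of_prefix_ofFn (List.prefix_refl _)⟩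

lemma prefixTree_subset {T : Set (List α)} (h : D ⊆ body T) : prefixTree D ⊆ T := by
  rintro σ ⟨f, hf, hσ⟩
  exact hσ ▸ h hf σ.length

lemma mem_prefixTree_of_prefix {σ τ : List α} (hσ : σ ∈ prefixTree D) (hτ : τ <+: σ) :
    τ ∈ prefixTree D := by
  obtain ⟨f, hf, hσf⟩ := hσ
  exact ⟨f, hf, ofFn_length_eq_of_prefix_ofFn (by rwa [hσf])⟩

lemma perfectTree_prefixTree [TopologicalSpace α] [DiscreteTopology α] (hD : Preperfect D) :
    PerfectTree (prefixTree D) := by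
  rintro σ ⟨f, hf, hσ⟩
  obtain ⟨g, ⟨hgσ, hg⟩, hgf⟩ := preperfect_iff_nhds.1 hD f hf _
    ((isOpen_cylinder _ f σ.length).mem_nhds (self_mem_cylinder f σ.length))
  -- `g` agrees with `f` below `σ.length`, so they split at some level `k ≥ σ.length`.
  obtain ⟨k, hk⟩ := Function.ne_iff.1 hgf
  have hσk : σ.length < k + 1 :=
    Nat.lt_succ_of_le (not_lt.1 fun h => hk (mem_cylinder_iff.1 hgσ k h))
  have hσg : g ↾ σ.length = σ := (ofFn_eq_ofFn_iff_mem_cylinder.2 hgσ).symm.trans hσ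
  refine ⟨f ↾ (k + 1), ofFn_mem_prefixTree hf _, g ↾ (k + 1), ofFn_mem_prefixTree hg _,
    prefix_ofFn_and_ne_of_lt hσ hσk, prefix_ofFn_and_ne_of_lt hσg hσk,
    incomp_of_length_eq_of_ne (by simp) fun h => hk ?_⟩
  exact ofFn_eq_ofFn_iff_mem_cylinder.1 h k (Nat.lt_succ_self k)

lemma perfectSubtree_prefixTree [TopologicalSpace α] [DiscreteTopology α] {T : Set (List α)}
    (hD : Perfect D) (hne : D.Nonempty) (hDT : D ⊆ body T) : PerfectSubtree (prefixTree D) T :=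
  ⟨prefixTree_subset hDT, hne.elim fun _ hf => ⟨_, ofFn_mem_prefixTree hf 0⟩,
    fun _ hσ _ hτ => mem_prefixTree_of_prefix hσ hτ, perfectTree_prefixTree hD.acc⟩

end Body

lemma Perfect.not_countable {X : Type*} [TopologicalSpace X] [PolishSpace X] {C : Set X}
    (hC : Perfect C) (hne : C.Nonempty) : ¬C.Countable := by
  let := TopologicalSpace.upgradeIsCompletelyMetrizable X
  obtain ⟨φ, hφC, -, hφ⟩ := hC.exists_nat_bool_injection hne
  have : Uncountable (ℕ → Bool) := by
    rw [← Cardinal.aleph0_lt_mk_iff]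
    simpa using Cardinal.cantor Cardinal.aleph0
  intro hcount
  exact _root_.not_countable (countable_univ_iff.1
    ((mapsTo_univ_iff.2 fun x => hφC ⟨x, rfl⟩).countable_of_injOn hφ.injOn hcount))

theorem uncountable_body_iff_perfectSubtree_general {T : Set (List ℕ)} :
    ¬(body T).Countable ↔ ∃ S : Set (List ℕ), PerfectSubtree S T := by
  constructor
  · intro hunc
    obtain ⟨D, hD, hne, hDT⟩ :=
      exists_perfect_nonempty_of_isClosed_of_not_countable (isClosed_body T) hunc
    exact ⟨prefixTree D, perfectSubtree_prefixTree hD hne hDT⟩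
  · rintro ⟨S, hST, ⟨σ, hσ⟩, hS, hP⟩ hcount
    obtain ⟨f, hf, -⟩ := exists_mem_body_ofFn_eq hS hP.exists_proper_extension hσ
    exact (perfect_body hS hP).not_countable ⟨f, hf⟩ (hcount.mono (body_mono hST))

/-- **Perfect tree theorem**: a tree on `ℕ` has uncountable body iff it contains a perfect
subtree. -/
theorem uncountable_body_iff_perfectSubtree {T : Set (List ℕ)} (hT : IsTree T) :
    ¬(body T).Countable ↔ ∃ S : Set (List ℕ), PerfectSubtree S T :=
  uncountable_body_iff_perfectSubtree_general
end

section
/- If P ⊆ (ℕ → Bool) is a perfect set, then the image s_b(P) is a perfect subset of ℝ. -/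
/-!
`s_b` is continuous and at most two-to-one: if two distinct binary expansions have the same
value and first differ at place `n`, then one of them is `0` and the other `1` at every later
place. A continuous map with finite fibres on a T₁ space sends accumulation points of `P` to
accumulation points of the image (a neighbourhood of `p` meets `P` in infinitely many points,
which cannot all lie in the fibre of `p`), and the image of the compact set `P` is closed.
-/

/-- The map computing a real in `[0,1]` from its binary expansion:
`s_b p = Σ_{i∈ℕ} p i · 2^{-(i+1)}`. -/
noncomputable def sb (p : ℕ → Bool) : ℝ :=
  ∑' i : ℕ, (if p i then (1 : ℝ) else 0) / 2 ^ (i + 1)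

open Filter Topology

theorem Preperfect.image_of_finite_fibers {X Y : Type*} [TopologicalSpace X] [T1Space X]
    [TopologicalSpace Y] {f : X → Y} {C : Set X} (hC : Preperfect C) (hf : Continuous f)
    (hfin : ∀ y, (f ⁻¹' {y}).Finite) : Preperfect (f '' C) := by
  rw [preperfect_iff_nhds]
  rintro _ ⟨x, hxC, rfl⟩ U hU
  have hinf : (f ⁻¹' U ∩ C).Infinite :=
    Set.Infinite.of_accPt <| (hC x hxC).nhds_inter <| hf.continuousAt.preimage_mem_nhds hU
  obtain ⟨y, ⟨hyU, hyC⟩, hyx⟩ := (hinf.sdiff (hfin (f x))).nonempty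
  exact ⟨f y, ⟨hyU, y, hyC, rfl⟩, hyx⟩

namespace Real

variable {b : ℕ}

theorem ofDigits_eq_zero_iff {a : ℕ → Fin (b + 1)} : ofDigits a = 0 ↔ ∀ i, a i = 0 := by
  rw [ofDigits, ← summable_ofDigitsTerm.hasSum_iff,
    hasSum_zero_iff_of_nonneg fun _ ↦ ofDigitsTerm_nonneg, funext_iff]
  refine forall_congr' fun i ↦ ?_
  simp [ofDigitsTerm, Fin.val_eq_zero_iff, Nat.cast_add_one_ne_zero]

theorem ofDigits_rev [NeZero b] (a : ℕ → Fin (b + 1)) :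
    ofDigits (Fin.rev ∘ a) = 1 - ofDigits a := by
  have hterm (i : ℕ) : ofDigitsTerm (Fin.rev ∘ a) i + ofDigitsTerm a i =
      ofDigitsTerm (fun _ ↦ Fin.last b) i := by
    simp only [ofDigitsTerm, Function.comp_apply, Fin.val_rev, Fin.val_last, ← add_mul,
      ← Nat.cast_add]
    congr 2
    have := (a i).isLt
    omega
  rw [eq_sub_iff_add_eq, ← ofDigits_const_last_eq_one b, ofDigits, ofDigits, ofDigits,
    ← summable_ofDigitsTerm.tsum_add summable_ofDigitsTerm]
  exact tsum_congr hterm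

theorem ofDigits_eq_one_iff [NeZero b] {a : ℕ → Fin (b + 1)} :
    ofDigits a = 1 ↔ ∀ i, a i = Fin.last b := by
  rw [eq_comm, ← sub_eq_zero, ← ofDigits_rev, ofDigits_eq_zero_iff]
  simp [Fin.rev_eq_iff]

theorem ofDigits_tail_eq_zero_and_one_of_lt {x y : ℕ → Fin (b + 1)} {n : ℕ}
    (hagree : ∀ i < n, x i = y i) (hlt : y n < x n) (heq : ofDigits x = ofDigits y) :
    ofDigits (fun i ↦ x (i + (n + 1))) = 0 ∧ ofDigits (fun i ↦ y (i + (n + 1))) = 1 := by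
  have hx := ofDigits_eq_sum_add_ofDigits x (n + 1)
  have hy := ofDigits_eq_sum_add_ofDigits y (n + 1)
  have hhead : ∑ i ∈ Finset.range n, ofDigitsTerm x i = ∑ i ∈ Finset.range n, ofDigitsTerm y i :=
    Finset.sum_congr rfl fun i hi ↦ by rw [ofDigitsTerm, hagree i (Finset.mem_range.mp hi)]; rfl
  rw [Finset.sum_range_succ, hhead] at hx
  rw [Finset.sum_range_succ] at hy
  simp only [ofDigitsTerm] at hx hy
  have hc : (0 : ℝ) < (((b + 1 : ℕ) : ℝ) ^ (n + 1))⁻¹ := by positivity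
  have hdigits : ((x n : ℕ) : ℝ) + ofDigits (fun i ↦ x (i + (n + 1))) =
      (y n : ℕ) + ofDigits (fun i ↦ y (i + (n + 1))) :=
    mul_left_cancel₀ hc.ne' (by linear_combination hx.symm.trans (heq.trans hy))
  have hdigit : ((y n : ℕ) : ℝ) + 1 ≤ (x n : ℕ) := by exact_mod_cast hlt
  have := ofDigits_nonneg fun i ↦ x (i + (n + 1))
  have := ofDigits_le_one fun i ↦ y (i + (n + 1))
  constructor <;> linarith

theorem eventually_zero_and_last_of_ofDigits_eq_of_lt [NeZero b] {x y : ℕ → Fin (b + 1)}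
    (hlt : toLex y < toLex x) (heq : ofDigits x = ofDigits y) :
    (∀ᶠ i in atTop, x i = 0) ∧ ∀ᶠ i in atTop, y i = Fin.last b := by
  obtain ⟨n, hagree, hn⟩ := hlt
  obtain ⟨hx, hy⟩ :=
    ofDigits_tail_eq_zero_and_one_of_lt (fun i hi ↦ (hagree i hi).symm) hn heq
  rw [← map_add_atTop_eq_nat (n + 1)]
  exact ⟨eventually_map.2 (.of_forall (ofDigits_eq_zero_iff.1 hx)),
    eventually_map.2 (.of_forall (ofDigits_eq_one_iff.1 hy))⟩

theorem eventually_zero_and_last_of_ofDigits_eq [NeZero b] {x y : ℕ → Fin (b + 1)}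
    (hne : x ≠ y) (heq : ofDigits x = ofDigits y) :
    ((∀ᶠ i in atTop, x i = 0) ∧ ∀ᶠ i in atTop, y i = Fin.last b) ∨
      ((∀ᶠ i in atTop, y i = 0) ∧ ∀ᶠ i in atTop, x i = Fin.last b) := by
  rcases lt_or_gt_of_ne (a := toLex x) (b := toLex y) hne with h | h
  · exact .inr (eventually_zero_and_last_of_ofDigits_eq_of_lt h heq.symm)
  · exact .inl (eventually_zero_and_last_of_ofDigits_eq_of_lt h heq)

theorem finite_ofDigits_preimage_singleton [NeZero b] (r : ℝ) :
    (ofDigits ⁻¹' {r} : Set (ℕ → Fin (b + 1))).Finite := by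
  set F : Set (ℕ → Fin (b + 1)) := ofDigits ⁻¹' {r}
  have hzero : (F ∩ {x | ¬ ∀ᶠ i in atTop, x i = 0}).Subsingleton := by
    rintro x ⟨hx, hx0⟩ y ⟨hy, hy0⟩
    by_contra hne
    rcases eventually_zero_and_last_of_ofDigits_eq hne (hx.trans hy.symm) with h | h
    exacts [hx0 h.1, hy0 h.1]
  have hlast : (F ∩ {x | ¬ ∀ᶠ i in atTop, x i = Fin.last b}).Subsingleton := by
    rintro x ⟨hx, hxl⟩ y ⟨hy, hyl⟩
    by_contra hne
    rcases eventually_zero_and_last_of_ofDigits_eq hne (hx.trans hy.symm) with h | h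
    exacts [hyl h.2, hxl h.2]
  refine (hzero.finite.union hlast.finite).subset fun x hx ↦ ?_
  by_contra hx'
  simp only [Set.mem_union, Set.mem_inter_iff, hx, true_and, Set.mem_ofPred_eq, not_or,
    not_not] at hx'
  obtain ⟨i, hi0, hilast⟩ := (hx'.1.and hx'.2).exists
  exact Fin.last_pos'.ne (hi0.symm.trans hilast)

end Real

open Real

theorem sb_eq_ofDigits_comp : sb = ofDigits ∘ fun p i ↦ finTwoEquiv.symm (p i) := by
  ext p
  refine tsum_congr fun i ↦ ?_
  cases h : p i <;> simp [h, ofDigitsTerm, finTwoEquiv, div_eq_mul_inv]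

theorem continuous_sb : Continuous sb := by
  rw [sb_eq_ofDigits_comp]
  exact continuous_ofDigits.comp <| continuous_pi fun i ↦
    continuous_of_discreteTopology.comp (continuous_apply i)

theorem finite_sb_preimage_singleton (x : ℝ) : (sb ⁻¹' {x}).Finite := by
  rw [sb_eq_ofDigits_comp, Set.preimage_comp]
  exact (finite_ofDigits_preimage_singleton (b := 1) x).preimage
    finTwoEquiv.symm.injective.comp_left.injOn

/-- The image under `s_b` of a perfect subset of Cantor space is a perfect subset of `ℝ`. -/
theorem sb_image_perfect {P : Set (ℕ → Bool)} (hP : Perfect P) :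
    Perfect (sb '' P) :=
  ⟨(hP.closed.isCompact.image continuous_sb).isClosed,
    hP.acc.image_of_finite_fibers continuous_sb finite_sb_preimage_singleton⟩
end
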